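/- For t > 0 and λ ≥ 0, (√(1+λ) − √λ)^{2t} = (Γ(t+1/2)Γ(t+1))/(Γ(1/2)Γ(2t+1)) · λ^{−t} · F(t, t+1/2, 2t+1; −1/λ) for λ > 0; equivalently, if γ_t is Gamma(t) and β_{1/2,1/2+t} is Beta(1/2, 1/2+t), independent, then E[exp(−λ γ_t / β_{1/2,1/2+t})] = (√(1+λ) − √λ)^{2t}. -/

import Mathlib

open MeasureTheory Set Real

/-- Euler integral representation of the Gauss hypergeometric function. -/
noncomputable def gaussF (α δ γ z : ℝ) : ℝ :=
  (Real.Gamma γ / (Real.Gamma δ * Real.Gamma (γ - δ))) *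
    ∫ t in Ioo (0:ℝ) 1, t ^ (δ - 1) * (1 - t) ^ (γ - δ - 1) * (1 - t * z) ^ (-α)

/-!
Write `I_s(l) = ∫₀¹ u^(t-1/2) (1-u)^(t-1/2) (u+l)^(-s) du` (`betaStieltjes t s l`). Both claims
reduce to `I_t(l) = (√(1+l) - √l)^(2t) B(1/2, t+1/2)`: the Euler integral of
`F(t, t+1/2; 2t+1; -1/l)` is `l^t I_t(l)` up to Gamma factors, and integrating out the Gamma
variable first turns the Laplace transform into `I_t(l) / B(1/2, t+1/2)`.

For that identity, the involution `w ↦ l(1-w)/(l+w)` of `(0,1)` gives `I_t = √(l(1+l)) I_{t+1}`.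
Since `I_t' = -t I_{t+1}` and `(√(1+l) + √l)^(2t)` has logarithmic derivative
`t / √(l(1+l))`, the product `(√(1+l) + √l)^(2t) I_t(l)` is constant on `[0, ∞)`, and at `l = 0`
it is the Beta integral `B(1/2, t+1/2)`.
-/

lemma cpow_mul_one_sub_cpow_eq_ofReal {a b x : ℝ} (hx : x ∈ Ioo (0:ℝ) 1) :
    (x:ℂ) ^ ((a:ℂ) - 1) * (1 - (x:ℂ)) ^ ((b:ℂ) - 1)
      = ((x ^ (a - 1) * (1 - x) ^ (b - 1) : ℝ) : ℂ) := by
  rw [Complex.ofReal_mul, Complex.ofReal_cpow hx.1.le, Complex.ofReal_cpow (sub_nonneg.2 hx.2.le)]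
  push_cast
  rfl

lemma integrableOn_rpow_mul_one_sub_rpow {a b : ℝ} (ha : 0 < a) (hb : 0 < b) :
    IntegrableOn (fun u : ℝ => u ^ (a - 1) * (1 - u) ^ (b - 1)) (Ioo 0 1) := by
  have hc := (Complex.betaIntegral_convergent (u := a) (v := b) (by simpa) (by simpa)).1
  have := ((hc.mono_set Ioo_subset_Ioc_self).congr_fun
    (fun x hx => cpow_mul_one_sub_cpow_eq_ofReal hx) measurableSet_Ioo).re
  simpa [IntegrableOn] using this

lemma integral_rpow_mul_one_sub_rpow {a b : ℝ} (ha : 0 < a) (hb : 0 < b) :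
    ∫ u in Ioo (0:ℝ) 1, u ^ (a - 1) * (1 - u) ^ (b - 1)
      = Gamma a * Gamma b / Gamma (a + b) := by
  have h := Complex.betaIntegral_eq_Gamma_mul_div a b (by simpa) (by simpa)
  rw [Complex.betaIntegral, intervalIntegral.integral_of_le zero_le_one,
    integral_Ioc_eq_integral_Ioo,
    setIntegral_congr_fun measurableSet_Ioo fun x hx => cpow_mul_one_sub_cpow_eq_ofReal hx,
    integral_complex_ofReal, ← Complex.ofReal_add, Complex.Gamma_ofReal, Complex.Gamma_ofReal,
    Complex.Gamma_ofReal] at h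
  exact_mod_cast h

noncomputable def betaStieltjes (t s l : ℝ) : ℝ :=
  ∫ u in Ioo (0:ℝ) 1, u ^ (t - 1/2) * (1 - u) ^ (t - 1/2) * (u + l) ^ (-s)

section BetaStieltjes

variable {t s : ℝ}

lemma betaStieltjes_integrand_le {l u : ℝ} (hs : 0 ≤ s) (hl : 0 ≤ l)
    (hu : u ∈ Ioo (0:ℝ) 1) :
    u ^ (t - 1/2) * (1 - u) ^ (t - 1/2) * (u + l) ^ (-s)
      ≤ u ^ ((t + 1/2 - s) - 1) * (1 - u) ^ ((t + 1/2) - 1) := by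
  obtain ⟨hu0, hu1⟩ := hu
  have hv : 0 < 1 - u := sub_pos.2 hu1
  calc u ^ (t - 1/2) * (1 - u) ^ (t - 1/2) * (u + l) ^ (-s)
      ≤ u ^ (t - 1/2) * (1 - u) ^ (t - 1/2) * u ^ (-s) :=
        mul_le_mul_of_nonneg_left
          (rpow_le_rpow_of_nonpos hu0 (le_add_of_nonneg_right hl) (neg_nonpos.2 hs)) (by positivity)
    _ = u ^ ((t + 1/2 - s) - 1) * (1 - u) ^ ((t + 1/2) - 1) := by
        rw [mul_right_comm, ← rpow_add hu0]
        ring_nf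

lemma norm_betaStieltjes_integrand_le {l : ℝ} (hs : 0 ≤ s) (hl : 0 ≤ l) :
    ∀ᵐ u ∂volume.restrict (Ioo (0:ℝ) 1),
      ‖u ^ (t - 1/2) * (1 - u) ^ (t - 1/2) * (u + l) ^ (-s)‖
        ≤ u ^ ((t + 1/2 - s) - 1) * (1 - u) ^ ((t + 1/2) - 1) := by
  filter_upwards [self_mem_ae_restrict measurableSet_Ioo] with u hu
  have hu0 : 0 < u := hu.1
  have hv : 0 < 1 - u := sub_pos.2 hu.2
  rw [norm_of_nonneg (by positivity)]
  exact betaStieltjes_integrand_le hs hl hu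

lemma integrableOn_betaStieltjes_integrand {l : ℝ} (hs : 0 ≤ s) (hst : s < t + 1/2)
    (hl : 0 ≤ l) :
    IntegrableOn (fun u : ℝ => u ^ (t - 1/2) * (1 - u) ^ (t - 1/2) * (u + l) ^ (-s))
      (Ioo 0 1) :=
  (integrableOn_rpow_mul_one_sub_rpow (by linarith) (by linarith)).mono'
    (by fun_prop) (norm_betaStieltjes_integrand_le hs hl)

lemma continuousOn_betaStieltjes (hs : 0 ≤ s) (hst : s < t + 1/2) :
    ContinuousOn (betaStieltjes t s) (Ici 0) := by
  refine continuousOn_of_dominated (fun _ _ => by fun_prop)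
    (fun l hl => norm_betaStieltjes_integrand_le hs hl)
    (integrableOn_rpow_mul_one_sub_rpow (by linarith) (by linarith)) ?_
  filter_upwards [self_mem_ae_restrict measurableSet_Ioo] with u hu
  refine continuousOn_const.mul ((continuous_const_add u).continuousOn.rpow_const ?_)
  exact fun l hl => Or.inl (by linarith [hu.1, mem_Ici.1 hl])

lemma hasDerivAt_betaStieltjes {l : ℝ} (hs : 0 ≤ s) (hst : s < t + 1/2) (hl : 0 < l) :
    HasDerivAt (betaStieltjes t s) (-s * betaStieltjes t (s + 1) l) l := by
  have hball : ∀ x ∈ Metric.ball l (l / 2), l / 2 < x := fun x hx => by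
    rw [Real.ball_eq_Ioo] at hx; linarith [hx.1]
  have key := hasDerivAt_integral_of_dominated_loc_of_deriv_le
    (F := fun x u => u ^ (t - 1/2) * (1 - u) ^ (t - 1/2) * (u + x) ^ (-s))
    (F' := fun x u => -s * (u ^ (t - 1/2) * (1 - u) ^ (t - 1/2) * (u + x) ^ (-(s + 1))))
    (bound := fun u => 2 * s / l * (u ^ ((t + 1/2 - s) - 1) * (1 - u) ^ ((t + 1/2) - 1)))
    (Metric.ball_mem_nhds l (half_pos hl)) (.of_forall fun _ => by fun_prop)
    (integrableOn_betaStieltjes_integrand hs hst hl.le) (by fun_prop) ?bound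
    ((integrableOn_rpow_mul_one_sub_rpow (by linarith) (by linarith)).const_mul _) ?diff
  case bound =>
    filter_upwards [self_mem_ae_restrict measurableSet_Ioo] with u hu x hx
    have hv : 0 < 1 - u := sub_pos.2 hu.2
    have hu0 := hu.1
    have hux : l / 2 < u + x := by linarith [hball x hx]
    have hux0 : 0 < u + x := by linarith
    calc ‖-s * (u ^ (t - 1/2) * (1 - u) ^ (t - 1/2) * (u + x) ^ (-(s + 1)))‖
        = s * (u ^ (t - 1/2) * (1 - u) ^ (t - 1/2) * (u + x) ^ (-s)) / (u + x) := by
          rw [norm_mul, norm_neg, norm_of_nonneg hs, norm_of_nonneg (by positivity),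
            show -(s + 1) = -s - 1 by ring, rpow_sub_one hux0.ne']
          ring
      _ ≤ s * (u ^ ((t + 1/2 - s) - 1) * (1 - u) ^ ((t + 1/2) - 1)) / (l / 2) := by
          refine div_le_div₀ (by positivity) ?_ (by positivity) hux.le
          exact mul_le_mul_of_nonneg_left
            (betaStieltjes_integrand_le hs (by linarith [hball x hx]) hu) hs
      _ = 2 * s / l * (u ^ ((t + 1/2 - s) - 1) * (1 - u) ^ ((t + 1/2) - 1)) := by ring
  case diff =>
    filter_upwards [self_mem_ae_restrict measurableSet_Ioo] with u hu x hx
    have hux : 0 < u + x := by linarith [hu.1, hball x hx]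
    refine ((((hasDerivAt_id' x).const_add u).rpow_const (Or.inl hux.ne')).const_mul
      (u ^ (t - 1/2) * (1 - u) ^ (t - 1/2))).congr_deriv ?_
    rw [show -s - 1 = -(s + 1) by ring]
    ring
  rw [betaStieltjes, ← integral_const_mul]
  exact key.2

lemma betaStieltjes_zero (ht : -1/2 < t) (hst : s < t + 1/2) :
    betaStieltjes t s 0 = Gamma (t + 1/2 - s) * Gamma (t + 1/2) / Gamma (2 * t + 1 - s) := by
  rw [betaStieltjes, ← show t + 1/2 - s + (t + 1/2) = 2 * t + 1 - s by ring,
    ← integral_rpow_mul_one_sub_rpow (sub_pos.2 hst) (by linarith)]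
  refine setIntegral_congr_fun measurableSet_Ioo fun u hu => ?_
  rw [add_zero, mul_right_comm, ← rpow_add hu.1]
  ring_nf

end BetaStieltjes

noncomputable def mobiusInvolution (l w : ℝ) : ℝ := l * (1 - w) / (l + w)

lemma one_sub_mobiusInvolution {l w : ℝ} (hl : 0 < l) (hw : 0 < w) :
    1 - mobiusInvolution l w = w * (1 + l) / (l + w) := by
  rw [mobiusInvolution]; field_simp; ring

lemma mobiusInvolution_add {l w : ℝ} (hl : 0 < l) (hw : 0 < w) :
    mobiusInvolution l w + l = l * (1 + l) / (l + w) := by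
  rw [mobiusInvolution]; field_simp; ring

lemma mapsTo_mobiusInvolution {l : ℝ} (hl : 0 < l) :
    MapsTo (mobiusInvolution l) (Ioo 0 1) (Ioo 0 1) := by
  intro w ⟨hw0, hw1⟩
  have hd : 0 < l + w := by linarith
  exact ⟨div_pos (mul_pos hl (by linarith)) hd, (div_lt_one hd).2 (by nlinarith)⟩

lemma mobiusInvolution_mobiusInvolution {l w : ℝ} (hl : 0 < l) (hw : 0 < w) :
    mobiusInvolution l (mobiusInvolution l w) = w := by
  rw [mobiusInvolution, one_sub_mobiusInvolution hl hw, add_comm l (mobiusInvolution l w),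
    mobiusInvolution_add hl hw]
  field_simp

lemma hasDerivAt_mobiusInvolution {l w : ℝ} (hl : 0 < l) (hw : 0 < w) :
    HasDerivAt (mobiusInvolution l) (-(l * (1 + l)) / (l + w) ^ 2) w := by
  have hd : l + w ≠ 0 := by linarith
  refine ((((hasDerivAt_id' w).const_sub 1).const_mul l).div ((hasDerivAt_id' w).const_add l)
    hd).congr_deriv ?_
  field_simp
  ring

lemma betaStieltjes_integrand_comp_mobiusInvolution {t l w : ℝ} (hl : 0 < l)
    (hw : w ∈ Ioo (0:ℝ) 1) :
    mobiusInvolution l w ^ (t - 1/2) * (1 - mobiusInvolution l w) ^ (t - 1/2)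
        * (mobiusInvolution l w + l) ^ (-t) * (l * (1 + l) / (l + w) ^ 2)
      = √(l * (1 + l)) * (w ^ (t - 1/2) * (1 - w) ^ (t - 1/2) * (w + l) ^ (-(t + 1))) := by
  obtain ⟨hw0, hw1⟩ := hw
  rw [one_sub_mobiusInvolution hl hw0, mobiusInvolution_add hl hw0, mobiusInvolution, add_comm w l]
  have hv : 0 < 1 - w := sub_pos.2 hw1
  apply log_injOn_pos (by simp only [mem_Ioi]; positivity) (by simp only [mem_Ioi]; positivity)
  simp (disch := positivity) only [log_mul, log_div, log_rpow, log_pow, log_sqrt]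
  ring

theorem betaStieltjes_eq_sqrt_mul (t : ℝ) {l : ℝ} (hl : 0 < l) :
    betaStieltjes t t l = √(l * (1 + l)) * betaStieltjes t (t + 1) l := by
  have himage : mobiusInvolution l '' Ioo 0 1 = Ioo 0 1 :=
    (mapsTo_mobiusInvolution hl).image_subset.antisymm fun w hw =>
      ⟨_, mapsTo_mobiusInvolution hl hw, mobiusInvolution_mobiusInvolution hl hw.1⟩
  have hinj : InjOn (mobiusInvolution l) (Ioo 0 1) := fun a ha b hb hab => by
    rw [← mobiusInvolution_mobiusInvolution hl ha.1, hab,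
      mobiusInvolution_mobiusInvolution hl hb.1]
  have hsubst := integral_image_eq_integral_abs_deriv_smul measurableSet_Ioo
    (fun w hw => (hasDerivAt_mobiusInvolution hl hw.1).hasDerivWithinAt) hinj
    (fun u => u ^ (t - 1/2) * (1 - u) ^ (t - 1/2) * (u + l) ^ (-t))
  rw [himage] at hsubst
  rw [betaStieltjes, hsubst, betaStieltjes, ← integral_const_mul]
  refine setIntegral_congr_fun measurableSet_Ioo fun w hw => ?_
  have := hw.1
  rw [smul_eq_mul, mul_comm, abs_div, abs_neg, abs_of_pos (by positivity),
    abs_of_pos (by positivity)]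
  exact betaStieltjes_integrand_comp_mobiusInvolution hl hw

lemma hasDerivAt_sqrt_one_add_add_sqrt_rpow (p : ℝ) {x : ℝ} (hx : 0 < x) :
    HasDerivAt (fun y => (√(1 + y) + √y) ^ p)
      (p * (√(1 + x) + √x) ^ p / (2 * √(x * (1 + x)))) x := by
  have ha : 0 < √(1 + x) := sqrt_pos.2 (by linarith)
  have hb : 0 < √x := sqrt_pos.2 hx
  have hsum : HasDerivAt (fun y => √(1 + y) + √y) (1 / (2 * √(1 + x)) + 1 / (2 * √x)) x :=
    ((((hasDerivAt_id' x).const_add 1).sqrt (by linarith)).add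
      (hasDerivAt_sqrt hx.ne')).congr_deriv (by ring)
  refine (hsum.rpow_const (Or.inl (by positivity))).congr_deriv ?_
  rw [rpow_sub_one (by positivity), sqrt_mul hx.le]
  field_simp
  ring

theorem hasDerivAt_sqrt_one_add_add_sqrt_rpow_mul_betaStieltjes {t l : ℝ} (ht : 0 ≤ t)
    (hl : 0 < l) :
    HasDerivAt (fun x => (√(1 + x) + √x) ^ (2 * t) * betaStieltjes t t x) 0 l := by
  refine ((hasDerivAt_sqrt_one_add_add_sqrt_rpow (2 * t) hl).mul
    (hasDerivAt_betaStieltjes ht (by linarith) hl)).congr_deriv ?_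
  have hS : 0 < √(l * (1 + l)) := sqrt_pos.2 (by positivity)
  rw [betaStieltjes_eq_sqrt_mul t hl]
  field_simp
  ring

lemma sqrt_one_add_sub_sqrt_rpow_eq_inv {l : ℝ} (hl : 0 ≤ l) (p : ℝ) :
    (√(1 + l) - √l) ^ p = ((√(1 + l) + √l) ^ p)⁻¹ := by
  have hprod : (√(1 + l) - √l) * (√(1 + l) + √l) = 1 := by
    rw [mul_comm, ← sq_sub_sq, sq_sqrt (by linarith), sq_sqrt hl]
    ring
  rw [eq_inv_of_mul_eq_one_left hprod, inv_rpow (by positivity)]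

theorem betaStieltjes_self {t l : ℝ} (ht : 0 ≤ t) (hl : 0 ≤ l) :
    betaStieltjes t t l
      = (√(1 + l) - √l) ^ (2 * t) * (Gamma (1/2) * Gamma (t + 1/2) / Gamma (t + 1)) := by
  set H := fun x => (√(1 + x) + √x) ^ (2 * t) * betaStieltjes t t x
  have hH0 : H 0 = Gamma (1/2) * Gamma (t + 1/2) / Gamma (t + 1) := by
    simp only [H, add_zero, sqrt_one, sqrt_zero, one_rpow, one_mul]
    rw [betaStieltjes_zero (by linarith) (by linarith)]
    ring_nf
  have hHl : H l = H 0 := by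
    rcases hl.eq_or_lt with rfl | hl
    · rfl
    have hcont : ContinuousOn H (Icc 0 l) :=
      (((continuous_const_add 1).sqrt.add continuous_sqrt).rpow_const fun _ =>
        Or.inr (by linarith)).continuousOn.mul
        ((continuousOn_betaStieltjes ht (by linarith)).mono Icc_subset_Ici_self)
    obtain ⟨c, hc, hslope⟩ := exists_hasDerivAt_eq_slope H (fun _ => 0) hl hcont
      fun x hx => hasDerivAt_sqrt_one_add_add_sqrt_rpow_mul_betaStieltjes ht hx.1
    rw [eq_comm, div_eq_zero_iff, sub_eq_zero] at hslope
    exact hslope.resolve_right (by linarith)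
  rw [← hH0, ← hHl, sqrt_one_add_sub_sqrt_rpow_eq_inv hl]
  have : 0 < (√(1 + l) + √l) ^ (2 * t) := by positivity
  field_simp
  exact mul_comm _ _

lemma integral_exp_neg_mul_mul_gamma_density {t c : ℝ} (ht : 0 < t) (hc : -1 < c) :
    ∫ x in Ioi (0:ℝ), exp (-(c * x)) * (x ^ (t - 1) * exp (-x) / Gamma t) = (1 + c) ^ (-t) := by
  have hc' : 0 < 1 + c := by linarith
  calc ∫ x in Ioi (0:ℝ), exp (-(c * x)) * (x ^ (t - 1) * exp (-x) / Gamma t)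
      = (∫ x in Ioi (0:ℝ), x ^ (t - 1) * exp (-((1 + c) * x))) / Gamma t := by
        rw [← integral_div]
        refine setIntegral_congr_fun measurableSet_Ioi fun x _ => ?_
        rw [mul_div_assoc', mul_left_comm, ← exp_add]
        ring_nf
    _ = (1 + c) ^ (-t) := by
        rw [integral_rpow_mul_exp_neg_mul_Ioi ht hc', mul_div_assoc,
          div_self (Gamma_pos_of_pos ht).ne', mul_one, one_div, inv_rpow hc'.le, rpow_neg hc'.le]

lemma integrableOn_exp_neg_mul_mul_gamma_density {t c : ℝ} (ht : 0 < t) (hc : -1 < c) :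
    IntegrableOn (fun x => exp (-(c * x)) * (x ^ (t - 1) * exp (-x) / Gamma t)) (Ioi 0) :=
  .of_integral_ne_zero <| by
    rw [integral_exp_neg_mul_mul_gamma_density ht hc]
    exact (rpow_pos_of_pos (by linarith) _).ne'

theorem integral_integral_swap_of_nonneg {α β : Type*} [MeasurableSpace α] [MeasurableSpace β]
    {μ : Measure α} {ν : Measure β} [SFinite μ] [SFinite ν] {f : α → β → ℝ}
    (hf : AEStronglyMeasurable (Function.uncurry f) (μ.prod ν))
    (hf_nonneg : ∀ᵐ y ∂ν, ∀ᵐ x ∂μ, 0 ≤ f x y)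
    (hf_sec : ∀ᵐ y ∂ν, Integrable (f · y) μ)
    (hf_int : Integrable (fun y => ∫ x, f x y ∂μ) ν) :
    ∫ x, ∫ y, f x y ∂ν ∂μ = ∫ y, ∫ x, f x y ∂μ ∂ν := by
  refine integral_integral_swap ((integrable_prod_iff' hf).2 ⟨hf_sec, hf_int.congr ?_⟩)
  filter_upwards [hf_nonneg] with y hy
  exact integral_congr_ae (hy.mono fun x hx => (norm_of_nonneg hx).symm)

lemma rpow_neg_one_add_div_mul_beta_density {t l u : ℝ} (hl : 0 ≤ l)
    (hu : u ∈ Ioo (0:ℝ) 1) :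
    (1 + l / u) ^ (-t) * (u ^ ((1:ℝ) / 2 - 1) * (1 - u) ^ ((1:ℝ) / 2 + t - 1))
      = u ^ (t - 1/2) * (1 - u) ^ (t - 1/2) * (u + l) ^ (-t) := by
  obtain ⟨hu0, hu1⟩ := hu
  have hv : 0 < 1 - u := sub_pos.2 hu1
  apply log_injOn_pos (by simp only [mem_Ioi]; positivity) (by simp only [mem_Ioi]; positivity)
  rw [show 1 + l / u = (u + l) / u by field_simp]
  simp (disch := positivity) only [log_mul, log_div, log_rpow]
  ring

theorem integral_laplace_gamma_div_beta {t l : ℝ} (ht : 0 < t) (hl : 0 ≤ l) :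
    ∫ x in Ioi (0:ℝ), ∫ u in Ioo (0:ℝ) 1,
        exp (-(l * x / u)) * (x ^ (t - 1) * exp (-x) / Gamma t) *
          (u ^ ((1:ℝ) / 2 - 1) * (1 - u) ^ ((1:ℝ) / 2 + t - 1))
      = betaStieltjes t t l := by
  simp_rw [mul_div_right_comm l]
  have hc : ∀ u ∈ Ioo (0:ℝ) 1, -1 < l / u := fun u hu => by
    linarith [div_nonneg hl hu.1.le]
  have hinner : ∀ u ∈ Ioo (0:ℝ) 1,
      ∫ x in Ioi (0:ℝ), exp (-(l / u * x)) * (x ^ (t - 1) * exp (-x) / Gamma t)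
        * (u ^ ((1:ℝ) / 2 - 1) * (1 - u) ^ ((1:ℝ) / 2 + t - 1))
      = u ^ (t - 1/2) * (1 - u) ^ (t - 1/2) * (u + l) ^ (-t) := fun u hu => by
    rw [integral_mul_const, integral_exp_neg_mul_mul_gamma_density ht (hc u hu),
      rpow_neg_one_add_div_mul_beta_density hl hu]
  rw [integral_integral_swap_of_nonneg (by fun_prop),
    setIntegral_congr_fun measurableSet_Ioo hinner, betaStieltjes]
  · filter_upwards [self_mem_ae_restrict measurableSet_Ioo] with u ⟨hu0, hu1⟩
    filter_upwards [self_mem_ae_restrict measurableSet_Ioi] with x hx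
    have hv : 0 < 1 - u := sub_pos.2 hu1
    have : 0 < x := hx
    positivity
  · filter_upwards [self_mem_ae_restrict measurableSet_Ioo] with u hu
    exact (integrableOn_exp_neg_mul_mul_gamma_density ht (hc u hu)).mul_const _
  · exact (integrableOn_betaStieltjes_integrand ht.le (by linarith) hl).congr_fun
      (fun u hu => (hinner u hu).symm) measurableSet_Ioo

lemma gaussF_eq_betaStieltjes (t : ℝ) {l : ℝ} (hl : 0 < l) :
    gaussF t (t + 1/2) (2 * t + 1) (-1 / l)
      = Gamma (2 * t + 1) / (Gamma (t + 1/2) * Gamma (t + 1/2))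
        * (l ^ t * betaStieltjes t t l) := by
  rw [gaussF, show 2 * t + 1 - (t + 1/2) = t + 1/2 by ring, betaStieltjes,
    ← integral_const_mul (l ^ t)]
  congr 1
  refine setIntegral_congr_fun measurableSet_Ioo fun u hu => ?_
  have hul : 0 < u + l := by linarith [hu.1]
  rw [show 1 - u * (-1 / l) = (u + l) / l by field_simp; ring, div_rpow hul.le hl.le,
    rpow_neg hl.le, show t + 1/2 - 1 = t - 1/2 by ring, rpow_neg hul.le]
  field_simp

theorem laplace_Gamma_G_half (t : ℝ) (ht : 0 < t) :
    (∀ l : ℝ, 0 < l →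
      (Real.sqrt (1 + l) - Real.sqrt l) ^ (2 * t)
        = (Real.Gamma (t + 1 / 2) * Real.Gamma (t + 1)) /
            (Real.Gamma (1 / 2) * Real.Gamma (2 * t + 1)) * l ^ (-t) *
            gaussF t (t + 1 / 2) (2 * t + 1) (-1 / l)) ∧
    (∀ l : ℝ, 0 ≤ l →
      (∫ x in Ioi (0:ℝ), ∫ u in Ioo (0:ℝ) 1,
          Real.exp (-(l * x / u)) * (x ^ (t - 1) * Real.exp (-x) / Real.Gamma t) *
            (u ^ ((1:ℝ) / 2 - 1) * (1 - u) ^ ((1:ℝ) / 2 + t - 1) *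
              (Real.Gamma (1 / 2 + (1 / 2 + t)) /
                (Real.Gamma (1 / 2) * Real.Gamma (1 / 2 + t)))))
        = (Real.sqrt (1 + l) - Real.sqrt l) ^ (2 * t)) := by
  have hΓ₁ := Gamma_pos_of_pos (show (0:ℝ) < 1/2 by norm_num)
  have hΓ₂ := Gamma_pos_of_pos (show 0 < t + 1/2 by linarith)
  have hΓ₃ := Gamma_pos_of_pos (show 0 < t + 1 by linarith)
  constructor
  · intro l hl
    have hlt : 0 < l ^ t := rpow_pos_of_pos hl t
    have := Gamma_pos_of_pos (show 0 < 2 * t + 1 by linarith)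
    rw [gaussF_eq_betaStieltjes t hl, betaStieltjes_self ht.le hl.le, rpow_neg hl.le]
    field_simp
  · intro l hl
    simp_rw [← mul_assoc, integral_mul_const, mul_assoc (rexp _ * _)]
    rw [integral_laplace_gamma_div_beta ht hl, betaStieltjes_self ht.le hl,
      show (1:ℝ) / 2 + (1 / 2 + t) = t + 1 by ring, add_comm (1 / 2) t]
    field_simp
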